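/- Let M be a special local Moufang set with abelian root group U_∞ such that for each unit x, x·2 := x·α_x is also a unit. Then U_∞ is uniquely 2-divisible: for every g ∈ U_∞ there is a unique h ∈ U_∞ with h^2 = g. -/

import Mathlib

open Equiv

structure LocalMoufangSet (X : Type*) where
  r : X → X → Prop
  requiv : Equivalence r
  U : X → Subgroup (Equiv.Perm X)
  preserves : ∀ x : X, ∀ u ∈ U x, ∀ a b : X, r a b ↔ r (u a) (u b)
  big : ∃ a b c : X, ¬ r a b ∧ ¬ r b c ∧ ¬ r a c
  lm1 : ∀ x y : X, r x y → ∀ u ∈ U x, ∃ v ∈ U y, ∀ z : X, r (u z) (v z)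
  lm2_fix : ∀ x : X, ∀ u ∈ U x, u x = x
  lm2_trans : ∀ x y z : X, ¬ r y x → ¬ r z x → ∃! u : Equiv.Perm X, u ∈ U x ∧ u y = z
  lm2'_trans : ∀ x y z : X, ¬ r y x → ¬ r z x → ∃ u ∈ U x, r (u y) z
  lm2'_free : ∀ x : X, ∀ u ∈ U x, ∀ y : X, ¬ r y x → r (u y) y → ∀ z : X, r (u z) z
  lm3 : ∀ x : X, ∀ g ∈ (⨆ y : X, U y : Subgroup (Equiv.Perm X)),
      (U x).map (MulAut.conj g).toMonoidHom = U (g x)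

namespace LocalMoufangSet

variable {X : Type*} (M : LocalMoufangSet X)

/-- The little projective group. -/
def G : Subgroup (Equiv.Perm X) := ⨆ x : X, M.U x

/-- `x` is a unit with respect to the base points `o` (zero) and `ι` (infinity). -/
def IsUnitPt (o ι x : X) : Prop := ¬ M.r x o ∧ ¬ M.r x ι

/-- `μ` is the μ-map of `x`: it lies in the double coset `U_0 α_x U_0` and swaps `o` and `ι`.
(We use the left-action convention: a right product `g α h` corresponds to `h * α * g`.) -/
def IsMuMap (o ι x : X) (μ : Equiv.Perm X) : Prop :=
  μ o = ι ∧ μ ι = o ∧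
    ∃ a ∈ M.U ι, a o = x ∧ ∃ g ∈ M.U o, ∃ h ∈ M.U o, μ = h * a * g

/-- Specialness with respect to a μ-map `τ`: `(-x)τ = -(xτ)` for all units `x`. -/
def Special (o ι : X) (τ : Equiv.Perm X) : Prop :=
  ∀ z : X, IsUnitPt M o ι z → ∀ a ∈ M.U ι, a o = z → ∀ b ∈ M.U ι, b o = τ z →
    τ (a⁻¹ o) = b⁻¹ o

end LocalMoufangSet

/-! For a unit `z`, let `a ∈ U_∞` and `b ∈ U_0` move `0` resp. `∞` to `z`. Specialness says
that the negatives of `z` computed in `U_∞` and in `U_0` agree, so `a b a⁻¹` and `b a⁻¹ b⁻¹`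
are elements of `U_z` agreeing at `0`, hence equal. Evaluating this braid relation at `0` shows that
the element of `U_∞` moving `0` to `b z` squares to `a`; the hypothesis on `x·2` makes `b z` a
unit. So every element of `U_∞` moving `0` to a unit is a square, and the same identity with `0`
and `∞` exchanged shows that squaring is injective on such elements. Multiplying by `α_e`, which
commutes with everything in `U_∞`, reduces the elements fixing the class of `0` to this case. -/

theorem Equiv.Perm.apply_inv_self {α : Type*} (f : Equiv.Perm α) (x : α) : f (f⁻¹ x) = x :=
  Equiv.apply_symm_apply f x

theorem Equiv.Perm.inv_apply_self {α : Type*} (f : Equiv.Perm α) (x : α) : f⁻¹ (f x) = x :=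
  Equiv.symm_apply_apply f x

namespace LocalMoufangSet

variable {X : Type*} (M : LocalMoufangSet X)

section RootGroups

variable {x y z : X} {u v g : Perm X}

theorem not_r_symm (h : ¬ M.r x y) : ¬ M.r y x :=
  fun h' => h (M.requiv.symm h')

theorem exists_mem_U_apply_eq (hy : ¬ M.r y x) (hz : ¬ M.r z x) : ∃ u ∈ M.U x, u y = z :=
  (M.lm2_trans x y z hy hz).exists

theorem not_r_apply_of_mem_U (hu : u ∈ M.U x) (hy : ¬ M.r y x) : ¬ M.r (u y) x := by
  rwa [← M.lm2_fix x u hu, ← M.preserves x u hu]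

theorem eq_of_mem_U_of_apply_eq (hy : ¬ M.r y x) (hu : u ∈ M.U x) (hv : v ∈ M.U x)
    (h : u y = v y) : u = v :=
  (M.lm2_trans x y (u y) hy (M.not_r_apply_of_mem_U hu hy)).unique ⟨hu, rfl⟩ ⟨hv, h.symm⟩

theorem mem_G_of_mem_U (hu : u ∈ M.U x) : u ∈ M.G :=
  le_iSup M.U x hu

theorem r_iff_r_apply_of_mem_G (hg : g ∈ M.G) : ∀ a b : X, M.r a b ↔ M.r (g a) (g b) :=
  Subgroup.iSup_induction (C := fun g => ∀ a b, M.r a b ↔ M.r (g a) (g b)) M.U hg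
    (fun i u hu => M.preserves i u hu) (fun _ _ => Iff.rfl)
    fun _ q hp hq a b => (hq a b).trans (hp (q a) (q b))

theorem conj_mem_U (hg : g ∈ M.G) (hu : u ∈ M.U x) : g * u * g⁻¹ ∈ M.U (g x) := by
  rw [← M.lm3 x g hg]
  exact ⟨u, hu, rfl⟩

end RootGroups

section Negatives

/-- `a⁻¹ O` and `b⁻¹ I` are the negatives `-z` and `∼z` of `z`, computed in `U I` and in
`U O`. -/
def NegAgree (O I z : X) : Prop :=
  ∀ a ∈ M.U I, a O = z → ∀ b ∈ M.U O, b I = z → b⁻¹ I = a⁻¹ O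

variable {M} {O I z : X} {a b c : Perm X}

theorem NegAgree.symm (h : M.NegAgree O I z) : M.NegAgree I O z :=
  fun b hb hbI a ha haO => (h a ha haO b hb hbI).symm

theorem r_apply_iff_of_negAgree (h : M.NegAgree O I z) (ha : a ∈ M.U I) (haO : a O = z)
    (hb : b ∈ M.U O) (hbI : b I = z) : M.r (b z) I ↔ M.r (a z) O := by
  rw [← Perm.apply_inv_self b I, ← M.preserves O b hb, h a ha haO b hb hbI,
    M.preserves I a ha, Perm.apply_inv_self]

/-- Both sides lie in `U z` and send `O` to `I`. -/
theorem braid_of_neg_eq (hzO : ¬ M.r z O) (ha : a ∈ M.U I) (haO : a O = z)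
    (hb : b ∈ M.U O) (hbI : b I = z) (hneg : b⁻¹ I = a⁻¹ O) :
    a * b * a⁻¹ = b * a⁻¹ * b⁻¹ := by
  have h₁ : a * b * a⁻¹ ∈ M.U z := haO ▸ M.conj_mem_U (M.mem_G_of_mem_U ha) hb
  have h₂ : b * a⁻¹ * b⁻¹ ∈ M.U z := hbI ▸ M.conj_mem_U (M.mem_G_of_mem_U hb) (inv_mem ha)
  refine M.eq_of_mem_U_of_apply_eq (M.not_r_symm hzO) h₁ h₂ ?_
  simp only [Perm.mul_apply]
  rw [← hneg, Perm.apply_inv_self, M.lm2_fix I a ha, M.lm2_fix O b⁻¹ (inv_mem hb), ← hneg,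
    Perm.apply_inv_self]

theorem mul_self_eq_of_negAgree (hOI : ¬ M.r O I) (hzO : ¬ M.r z O)
    (ha : a ∈ M.U I) (haO : a O = z) (hb : b ∈ M.U O) (hbI : b I = z)
    (hc : c ∈ M.U I) (hcO : c O = b z)
    (hz : M.NegAgree O I z) (hbz : M.NegAgree O I (b z)) : c * c = a := by
  have hbraid : a * b⁻¹ * a⁻¹ = b * a * b⁻¹ := by
    simpa only [mul_inv_rev, inv_inv, mul_assoc] using
      congrArg (·⁻¹) (braid_of_neg_eq hzO ha haO hb hbI (hz a ha haO b hb hbI))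
  have hbb : (b * b)⁻¹ I = c⁻¹ O :=
    hbz c hc hcO (b * b) (mul_mem hb hb) (by rw [Perm.mul_apply, hbI])
  have hac : a (c⁻¹ O) = c O := by
    have h := congrArg (· O) hbraid
    simp only [Perm.mul_apply] at h
    rwa [M.lm2_fix O b⁻¹ (inv_mem hb), haO, ← hcO, ← hz a ha haO b hb hbI,
      ← Perm.mul_apply b⁻¹ b⁻¹, ← mul_inv_rev, hbb] at h
  have hone : c⁻¹ * a * c⁻¹ = 1 := by
    refine M.eq_of_mem_U_of_apply_eq hOI (mul_mem (mul_mem (inv_mem hc) ha) (inv_mem hc))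
      (one_mem _) ?_
    rw [Perm.mul_apply, Perm.mul_apply, hac, Perm.inv_apply_self, Perm.one_apply]
  calc c * c = c * (c⁻¹ * a * c⁻¹) * c := by rw [hone, mul_one]
    _ = a := by group

end Negatives

section Special

variable {M} {o ι e w : X} {τ g : Perm X}

theorem IsMuMap.mem_G (hτ : M.IsMuMap o ι e τ) : τ ∈ M.G := by
  obtain ⟨-, -, a, ha, -, g, hg, h, hh, rfl⟩ := hτ
  exact mul_mem (mul_mem (M.mem_G_of_mem_U hh) (M.mem_G_of_mem_U ha)) (M.mem_G_of_mem_U hg)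

theorem isUnitPt_apply_of_swap (hg : g ∈ M.G) (hgo : g o = ι) (hgι : g ι = o)
    (hw : M.IsUnitPt o ι w) : M.IsUnitPt o ι (g w) := by
  constructor
  · rw [← hgι, ← M.r_iff_r_apply_of_mem_G hg]
    exact hw.2
  · rw [← hgo, ← M.r_iff_r_apply_of_mem_G hg]
    exact hw.1

/-- Conjugating by `τ` carries the element of `U ι` moving `o` to `τ⁻¹ w` to the element of
`U o` moving `ι` to `w`; specialness then compares the two negatives. -/
theorem Special.negAgree (h0 : ¬ M.r o ι) (hτ : M.IsMuMap o ι e τ) (hsp : M.Special o ι τ)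
    (hw : M.IsUnitPt o ι w) : M.NegAgree o ι w := by
  intro a ha hao b hb hbι
  have hτG := hτ.mem_G
  have hτinvι : τ⁻¹ ι = o := by rw [← hτ.1, Perm.inv_apply_self]
  have hw' : M.IsUnitPt o ι (τ⁻¹ w) := isUnitPt_apply_of_swap (inv_mem hτG)
    (by rw [← hτ.2.1, Perm.inv_apply_self]) hτinvι hw
  obtain ⟨a', ha', ha'o⟩ := M.exists_mem_U_apply_eq h0 hw'.2
  have hconj : τ * a' * τ⁻¹ = b := by
    refine M.eq_of_mem_U_of_apply_eq (M.not_r_symm h0) ?_ hb ?_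
    · simpa only [hτ.2.1] using M.conj_mem_U hτG ha'
    · rw [Perm.mul_apply, Perm.mul_apply, hτinvι, ha'o, Perm.apply_inv_self, hbι]
  rw [← hconj, mul_inv_rev, mul_inv_rev, inv_inv, Perm.mul_apply, Perm.mul_apply, hτinvι]
  exact hsp _ hw' a' ha' ha'o a ha (by rw [hao, Perm.apply_inv_self])

end Special

section Squares

variable {M} {o ι w : X} {u b b' g : Perm X}

theorem isUnitPt_apply_of_r_apply_self (h0 : ¬ M.r o ι) (hu : u ∈ M.U ι) (huo : M.r (u o) o)
    (hw : M.IsUnitPt o ι w) : M.IsUnitPt o ι (u w) := by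
  have huw : M.r (u w) w := M.lm2'_free ι u hu o h0 huo w
  exact ⟨fun h => hw.1 (M.requiv.trans (M.requiv.symm huw) h),
    fun h => hw.2 (M.requiv.trans (M.requiv.symm huw) h)⟩

theorem exists_mul_self_eq_of_isUnitPt (h0 : ¬ M.r o ι)
    (hneg : ∀ w, M.IsUnitPt o ι w → M.NegAgree o ι w)
    (h2 : ∀ x : X, M.IsUnitPt o ι x → ∀ a ∈ M.U ι, a o = x → M.IsUnitPt o ι (a x))
    (hg : g ∈ M.U ι) (hgo : M.IsUnitPt o ι (g o)) : ∃ h ∈ M.U ι, h * h = g := by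
  obtain ⟨b, hb, hbι⟩ := M.exists_mem_U_apply_eq (M.not_r_symm h0) hgo.1
  have hpt : M.IsUnitPt o ι (b (g o)) :=
    ⟨M.not_r_apply_of_mem_U hb hgo.1,
      ((r_apply_iff_of_negAgree (hneg _ hgo) hg rfl hb hbι).not).mpr (h2 _ hgo g hg rfl).1⟩
  obtain ⟨c, hc, hco⟩ := M.exists_mem_U_apply_eq h0 hpt.2
  exact ⟨c, hc,
    mul_self_eq_of_negAgree h0 hgo.1 hg rfl hb hbι hc hco (hneg _ hgo) (hneg _ hpt)⟩

/-- The same square-root identity with `o` and `ι` exchanged recovers `b o` from `b * b`. -/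
theorem eq_of_mul_self_eq (h0 : ¬ M.r o ι)
    (hneg : ∀ w, M.IsUnitPt o ι w → M.NegAgree o ι w)
    (h2 : ∀ x : X, M.IsUnitPt o ι x → ∀ a ∈ M.U ι, a o = x → M.IsUnitPt o ι (a x))
    (hb : b ∈ M.U ι) (hb' : b' ∈ M.U ι) (hbo : M.IsUnitPt o ι (b o))
    (hb'o : M.IsUnitPt o ι (b' o)) (hsq : b * b = b' * b') : b = b' := by
  have hι := M.not_r_symm h0
  have hpt : M.IsUnitPt o ι (b (b o)) := h2 _ hbo b hb rfl
  have hpt' : b' (b' o) = b (b o) := by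
    simpa only [Perm.mul_apply] using congrArg (· o) hsq.symm
  obtain ⟨c, hc, hcι⟩ := M.exists_mem_U_apply_eq hι hpt.1
  obtain ⟨a, ha, haι⟩ := M.exists_mem_U_apply_eq hι hbo.1
  obtain ⟨a', ha', ha'ι⟩ := M.exists_mem_U_apply_eq hι hb'o.1
  have hca := mul_self_eq_of_negAgree hι hbo.2 ha haι hb rfl hc hcι
    (hneg _ hbo).symm (hneg _ hpt).symm
  have hca' := mul_self_eq_of_negAgree hι hb'o.2 ha' ha'ι hb' rfl hc (hcι.trans hpt'.symm)
    (hneg _ hb'o).symm (hpt' ▸ (hneg _ hpt).symm)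
  refine M.eq_of_mem_U_of_apply_eq h0 hb hb' ?_
  rw [← haι, ← ha'ι, ← hca, ← hca']

theorem eq_one_of_mul_self_eq_one (h0 : ¬ M.r o ι) {e : X} (he : M.IsUnitPt o ι e)
    (hneg : ∀ w, M.IsUnitPt o ι w → M.NegAgree o ι w)
    (hab : ∀ u ∈ M.U ι, ∀ v ∈ M.U ι, u * v = v * u)
    (h2 : ∀ x : X, M.IsUnitPt o ι x → ∀ a ∈ M.U ι, a o = x → M.IsUnitPt o ι (a x))
    (hu : u ∈ M.U ι) (hu2 : u * u = 1) : u = 1 := by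
  have huo : M.r (u o) o := by
    by_contra h
    have huuo := (h2 _ ⟨h, M.not_r_apply_of_mem_U hu h0⟩ u hu rfl).1
    rw [← Perm.mul_apply, hu2, Perm.one_apply] at huuo
    exact huuo (M.requiv.refl o)
  obtain ⟨a, ha, hao⟩ := M.exists_mem_U_apply_eq h0 he.2
  have hsq : u * a * (u * a) = a * a := by
    rw [Commute.mul_mul_mul_comm (hab a ha u hu), hu2, one_mul]
  have hua : u * a = a :=
    eq_of_mul_self_eq h0 hneg h2 (mul_mem hu ha) ha
      (by rw [Perm.mul_apply, hao]; exact isUnitPt_apply_of_r_apply_self h0 hu huo he)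
      (hao ▸ he) hsq
  exact mul_eq_right.mp hua

theorem exists_mul_self_eq (h0 : ¬ M.r o ι) {e : X} (he : M.IsUnitPt o ι e)
    (hneg : ∀ w, M.IsUnitPt o ι w → M.NegAgree o ι w)
    (hab : ∀ u ∈ M.U ι, ∀ v ∈ M.U ι, u * v = v * u)
    (h2 : ∀ x : X, M.IsUnitPt o ι x → ∀ a ∈ M.U ι, a o = x → M.IsUnitPt o ι (a x))
    (hg : g ∈ M.U ι) : ∃ h ∈ M.U ι, h * h = g := by
  by_cases hgo : M.r (g o) o
  · obtain ⟨a, ha, hao⟩ := M.exists_mem_U_apply_eq h0 he.2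
    have hga : M.IsUnitPt o ι ((g * (a * a)) o) := by
      rw [Perm.mul_apply, Perm.mul_apply, hao]
      exact isUnitPt_apply_of_r_apply_self h0 hg hgo (h2 e he a ha hao)
    obtain ⟨h, hh, hhg⟩ :=
      exists_mul_self_eq_of_isUnitPt h0 hneg h2 (mul_mem hg (mul_mem ha ha)) hga
    refine ⟨h * a⁻¹, mul_mem hh (inv_mem ha), ?_⟩
    rw [Commute.mul_mul_mul_comm (hab a⁻¹ (inv_mem ha) h hh), hhg, ← mul_inv_rev,
      mul_inv_cancel_right]
  · exact exists_mul_self_eq_of_isUnitPt h0 hneg h2 hg ⟨hgo, M.not_r_apply_of_mem_U hg h0⟩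

end Squares

end LocalMoufangSet

/-- if `U_∞` is abelian and `x·2` is a unit for every unit `x`,
then `U_∞` is uniquely 2-divisible. -/
theorem stmt18 {X : Type*} (M : LocalMoufangSet X) (o ι : X) (h0 : ¬ M.r o ι)
    (e : X) (he : M.IsUnitPt o ι e)
    (τ : Equiv.Perm X) (hτ : M.IsMuMap o ι e τ)
    (hsp : M.Special o ι τ)
    (hab : ∀ u ∈ M.U ι, ∀ v ∈ M.U ι, u * v = v * u)
    (h2 : ∀ x : X, M.IsUnitPt o ι x → ∀ a ∈ M.U ι, a o = x →
      M.IsUnitPt o ι (a x)) :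
    ∀ g ∈ M.U ι, ∃! h : Equiv.Perm X, h ∈ M.U ι ∧ h * h = g := by
  have hneg : ∀ w, M.IsUnitPt o ι w → M.NegAgree o ι w := fun _ => hsp.negAgree h0 hτ
  intro g hg
  obtain ⟨h, hh, rfl⟩ := LocalMoufangSet.exists_mul_self_eq h0 he hneg hab h2 hg
  refine ⟨h, ⟨hh, rfl⟩, fun y ⟨hy, hyh⟩ => ?_⟩
  have hsq : y * h⁻¹ * (y * h⁻¹) = 1 := by
    rw [Commute.mul_mul_mul_comm (hab h⁻¹ (inv_mem hh) y hy), hyh, ← mul_inv_rev,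
      mul_inv_cancel]
  exact mul_inv_eq_one.mp
    (LocalMoufangSet.eq_one_of_mul_self_eq_one h0 he hneg hab h2 (mul_mem hy (inv_mem hh)) hsq)
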